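/- Let (X,d) be a Robinson space and δ > 0 be such that the graph G_δ is not connected. Then at most one connected component of G_δ fails to be a block of (X,d), and every connected component of G_δ that is a block has diameter at most δ. -/

import Mathlib

structure Dissim (X : Type*) where
  d : X → X → ℝ
  symm : ∀ x y, d x y = d y x
  nonneg : ∀ x y, 0 ≤ d x y
  self : ∀ x, d x x = 0

variable {X : Type*}

def Compatible (D : Dissim X) (lt : X → X → Prop) : Prop :=
  ∀ x y z : X, lt x y → lt y z → D.d x y ≤ D.d x z ∧ D.d y z ≤ D.d x z

def IsCompatOrder (D : Dissim X) (lt : X → X → Prop) : Prop :=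
  IsStrictTotalOrder X lt ∧ Compatible D lt

def Robinson (D : Dissim X) : Prop :=
  ∃ lt : X → X → Prop, IsCompatOrder D lt

def IsMmodule (D : Dissim X) (M : Set X) : Prop :=
  ∀ z ∉ M, ∀ x ∈ M, ∀ y ∈ M, D.d z x = D.d z y

def IsInterval (lt : X → X → Prop) (I : Set X) : Prop :=
  ∀ a b c : X, lt a b → lt b c → a ∈ I → c ∈ I → b ∈ I

def IsBlock (D : Dissim X) (Y : Set X) : Prop :=
  ∀ lt : X → X → Prop, IsCompatOrder D lt → IsInterval lt Y

noncomputable def diam (D : Dissim X) (Y : Set X) : ℝ :=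
  sSup (Set.image2 D.d Y Y)

def Gdelta (D : Dissim X) (δ : ℝ) : SimpleGraph X where
  Adj x y := x ≠ y ∧ D.d x y ≠ δ
  symm := ⟨by
    rintro x y ⟨hxy, hd⟩
    exact ⟨hxy.symm, by rw [D.symm]; exact hd⟩⟩
  loopless := ⟨by rintro x ⟨h, -⟩; exact h rfl⟩

def Gle (D : Dissim X) (δ : ℝ) : SimpleGraph X where
  Adj x y := x ≠ y ∧ D.d x y ≤ δ
  symm := ⟨by
    rintro x y ⟨hxy, hd⟩
    exact ⟨hxy.symm, by rw [D.symm]; exact hd⟩⟩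
  loopless := ⟨by rintro x ⟨h, -⟩; exact h rfl⟩

def Glt (D : Dissim X) (δ : ℝ) : SimpleGraph X where
  Adj x y := x ≠ y ∧ D.d x y < δ
  symm := ⟨by
    rintro x y ⟨hxy, hd⟩
    exact ⟨hxy.symm, by rw [D.symm]; exact hd⟩⟩
  loopless := ⟨by rintro x ⟨h, -⟩; exact h rfl⟩

def IsCompOf {V : Type*} (G : SimpleGraph V) (C : Set V) : Prop :=
  ∃ x : V, C = {y | G.Reachable x y}

def MMax (D : Dissim X) : Set (Set X) :=
  {M | IsMmodule D M ∧ M ≠ Set.univ ∧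
    ∀ M' : Set X, IsMmodule D M' → M' ≠ Set.univ → M ⊆ M' → M = M'}

def IsPartition {α : Type*} (P : Set (Set α)) : Prop :=
  (∀ A ∈ P, A.Nonempty) ∧
  (∀ A ∈ P, ∀ B ∈ P, A ≠ B → Disjoint A B) ∧
  ⋃₀ P = Set.univ

def IsCopartition {α : Type*} (P : Set (Set α)) : Prop :=
  IsPartition ((fun M => Mᶜ) '' P)

def SimpleGraph.restrictTo {V : Type*} (G : SimpleGraph V) (S : Set V) : SimpleGraph V where
  Adj x y := x ∈ S ∧ y ∈ S ∧ G.Adj x y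
  symm := ⟨by rintro x y ⟨hx, hy, h⟩; exact ⟨hy, hx, h.symm⟩⟩
  loopless := ⟨by rintro x ⟨-, -, h⟩; exact G.irrefl h⟩

def ConnectedWithin {V : Type*} (G : SimpleGraph V) (S : Set V) : Prop :=
  S.Nonempty ∧ ∀ x ∈ S, ∀ y ∈ S, (G.restrictTo S).Reachable x y

def IsCompWithin {V : Type*} (G : SimpleGraph V) (S : Set V) (C : Set V) : Prop :=
  ∃ x ∈ S, C = {y | (G.restrictTo S).Reachable x y}

def IsStrictTotalOrderOn {α : Type*} (S : Set α) (lt : α → α → Prop) : Prop :=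
  (∀ x ∈ S, ¬ lt x x) ∧
  (∀ x ∈ S, ∀ y ∈ S, ∀ z ∈ S, lt x y → lt y z → lt x z) ∧
  (∀ x ∈ S, ∀ y ∈ S, x ≠ y → (lt x y ∨ lt y x) ∧ ¬ (lt x y ∧ lt y x))

def CompatibleOn (D : Dissim X) (S : Set X) (lt : X → X → Prop) : Prop :=
  ∀ x ∈ S, ∀ y ∈ S, ∀ z ∈ S, lt x y → lt y z → D.d x y ≤ D.d x z ∧ D.d y z ≤ D.d x z

def IsCompatOrderOn (D : Dissim X) (S : Set X) (lt : X → X → Prop) : Prop :=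
  IsStrictTotalOrderOn S lt ∧ CompatibleOn D S lt

def FlatOn (D : Dissim X) (S : Set X) : Prop :=
  ∃ lt : X → X → Prop, IsCompatOrderOn D S lt ∧ (∃ x ∈ S, ∃ y ∈ S, lt x y) ∧
    ∀ lt' : X → X → Prop, IsCompatOrderOn D S lt' →
      (∀ x ∈ S, ∀ y ∈ S, (lt' x y ↔ lt x y)) ∨ (∀ x ∈ S, ∀ y ∈ S, (lt' x y ↔ lt y x))

def Flat (D : Dissim X) : Prop :=
  ∃ lt : X → X → Prop, IsCompatOrder D lt ∧ (∃ x y : X, lt x y) ∧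
    ∀ lt' : X → X → Prop, IsCompatOrder D lt' →
      (∀ x y : X, lt' x y ↔ lt x y) ∨ (∀ x y : X, lt' x y ↔ lt y x)

def IsCopointAt (D : Dissim X) (p : X) (C : Set X) : Prop :=
  IsMmodule D C ∧ C.Nonempty ∧ p ∉ C ∧
  ∀ C' : Set X, IsMmodule D C' → p ∉ C' → C ⊆ C' → C = C'

def bigGraph (D : Dissim X) (δ : ℝ) (I : Set (Set X)) : SimpleGraph (Set X) where
  Adj C C' := C ∈ I ∧ C' ∈ I ∧ C ≠ C' ∧ ∃ x ∈ C, ∃ y ∈ C', δ < D.d x y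
  symm := ⟨by
    rintro C C' ⟨hC, hC', hne, x, hx, y, hy, hd⟩
    exact ⟨hC', hC, hne.symm, y, hy, x, hx, by rw [D.symm]; exact hd⟩⟩
  loopless := ⟨by rintro C ⟨-, -, hne, -⟩; exact hne rfl⟩

/-!
Every point outside a component `C` of `G_δ` is at distance exactly `δ` from all of `C`. So if
`u, v ∈ C` with `d(u,v) > δ`, compatibility puts every point outside `C` strictly between `u` and `v`
in any compatible order. If instead all distances within `C` are at most `δ`, then `C` is a block:
a point `b ∉ C` between two points of `C` is straddled by an edge `uv` of `G_δ` inside `C`, and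
`d(u,v) < δ = d(u,b)` contradicts compatibility. Hence a non-block component contains a pair at
distance `> δ`; two such components would each lie strictly inside the span of the other, and a
block containing such a pair would contain the (existing) points outside it.
-/

theorem SimpleGraph.exists_not_reachable_of_not_connected {V : Type*} {G : SimpleGraph V}
    (h : ¬ G.Connected) (x : V) : ∃ z, ¬ G.Reachable x z := by
  by_contra! hx
  exact h ((G.connected_iff).2 ⟨fun a b => (hx a).symm.trans (hx b), ⟨x⟩⟩)

theorem SimpleGraph.Reachable.exists_adj_lt_lt {G : SimpleGraph X} {lt : X → X → Prop}
    [IsStrictTotalOrder X lt] {a b c : X} (hac : G.Reachable a c) (hab : ¬ G.Reachable a b)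
    (h₁ : lt a b) (h₂ : lt b c) : ∃ u v, G.Reachable a u ∧ G.Adj u v ∧ lt u b ∧ lt b v := by
  obtain ⟨w⟩ := hac
  induction w with
  | nil => exact absurd (trans_of lt h₁ h₂) (irrefl_of lt _)
  | @cons a x c hax p ih =>
    rcases trichotomous_of lt x b with hxb | rfl | hbx
    · obtain ⟨u, v, hxu, huv, hub, hbv⟩ := ih (fun h => hab (hax.reachable.trans h)) hxb h₂
      exact ⟨u, v, hax.reachable.trans hxu, huv, hub, hbv⟩
    · exact absurd hax.reachable hab
    · exact ⟨a, x, .refl a, hax, h₁, hbx⟩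

theorem Compatible.lt_lt_of_d_lt {D : Dissim X} {lt : X → X → Prop} [IsStrictTotalOrder X lt]
    (hc : Compatible D lt) {u v z : X} (huv : lt u v) (hu : D.d u z < D.d u v)
    (hv : D.d z v < D.d u v) : lt u z ∧ lt z v := by
  have huz : lt u z := by
    rcases trichotomous_of lt u z with h | rfl | h
    · exact h
    · exact absurd hv (lt_irrefl _)
    · exact absurd (hc z u v h huv).2 (not_le.2 hv)
  refine ⟨huz, ?_⟩
  rcases trichotomous_of lt z v with h | rfl | h
  · exact h
  · exact absurd hu (lt_irrefl _)
  · exact absurd (hc u v z huv h).1 (not_le.2 hu)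

section Gdelta

variable {D : Dissim X} {δ : ℝ}

theorem d_eq_of_not_reachable {x z : X} (h : ¬ (Gdelta D δ).Reachable x z) : D.d x z = δ := by
  by_contra hd
  exact h (SimpleGraph.Adj.reachable ⟨fun hxz => h (hxz ▸ .refl x), hd⟩)

theorem lt_lt_of_not_reachable {lt : X → X → Prop} [IsStrictTotalOrder X lt]
    (hc : Compatible D lt) {x₀ u v z : X} (hu : (Gdelta D δ).Reachable x₀ u)
    (hv : (Gdelta D δ).Reachable x₀ v) (hz : ¬ (Gdelta D δ).Reachable x₀ z) (huv : lt u v)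
    (hd : δ < D.d u v) : lt u z ∧ lt z v := by
  refine hc.lt_lt_of_d_lt huv ?_ ?_
  · rwa [d_eq_of_not_reachable fun h => hz (hu.trans h)]
  · rwa [D.symm, d_eq_of_not_reachable fun h => hz (hv.trans h)]

theorem exists_lt_of_not_forall_d_le (lt : X → X → Prop) [IsStrictTotalOrder X lt]
    (hδ : 0 ≤ δ) {C : Set X} (h : ¬ ∀ u ∈ C, ∀ v ∈ C, D.d u v ≤ δ) :
    ∃ u ∈ C, ∃ v ∈ C, lt u v ∧ δ < D.d u v := by
  push Not at h
  obtain ⟨u, hu, v, hv, hd⟩ := h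
  rcases trichotomous_of lt u v with huv | rfl | hvu
  · exact ⟨u, hu, v, hv, huv, hd⟩
  · rw [D.self] at hd
    exact absurd hδ (not_le.2 hd)
  · exact ⟨v, hv, u, hu, hvu, D.symm u v ▸ hd⟩

theorem isBlock_of_forall_d_le {x₀ : X}
    (h : ∀ u ∈ {y | (Gdelta D δ).Reachable x₀ y}, ∀ v ∈ {y | (Gdelta D δ).Reachable x₀ y},
      D.d u v ≤ δ) :
    IsBlock D {y | (Gdelta D δ).Reachable x₀ y} := by
  rintro lt ⟨hto, hc⟩ a b c hab hbc (ha : (Gdelta D δ).Reachable x₀ a)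
    (hcC : (Gdelta D δ).Reachable x₀ c)
  by_contra hb
  obtain ⟨u, v, hau, huv, hub, hbv⟩ :=
    (ha.symm.trans hcC).exists_adj_lt_lt (fun h => hb (ha.trans h)) hab hbc
  have hu := ha.trans hau
  have hduv : D.d u v < δ := (h u hu v (hu.trans huv.reachable)).lt_of_ne huv.2
  have hdub : D.d u b = δ := d_eq_of_not_reachable fun h => hb (hu.trans h)
  linarith [(hc u b v hub hbv).1]

theorem forall_d_le_of_isBlock {lt : X → X → Prop} (hlt : IsCompatOrder D lt) (hδ : 0 ≤ δ)
    {x₀ z : X} (hz : ¬ (Gdelta D δ).Reachable x₀ z)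
    (hb : IsBlock D {y | (Gdelta D δ).Reachable x₀ y}) :
    ∀ u ∈ {y | (Gdelta D δ).Reachable x₀ y}, ∀ v ∈ {y | (Gdelta D δ).Reachable x₀ y},
      D.d u v ≤ δ := by
  by_contra h
  have := hlt.1
  obtain ⟨u, hu, v, hv, huv, hd⟩ := exists_lt_of_not_forall_d_le lt hδ h
  obtain ⟨huz, hzv⟩ := lt_lt_of_not_reachable hlt.2 hu hv hz huv hd
  exact hz (hb lt hlt u z v huz hzv hu hv)

end Gdelta

theorem stmt4_general (D : Dissim X)
    (hRob : Robinson D)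
    (δ : ℝ) (hδ : 0 < δ)
    (hnc : ¬ (Gdelta D δ).Connected) :
    (∀ C₁ C₂ : Set X, IsCompOf (Gdelta D δ) C₁ → IsCompOf (Gdelta D δ) C₂ →
      ¬ IsBlock D C₁ → ¬ IsBlock D C₂ → C₁ = C₂) ∧
    (∀ C : Set X, IsCompOf (Gdelta D δ) C → IsBlock D C → diam D C ≤ δ) := by
  obtain ⟨lt, hlt⟩ := hRob
  have := hlt.1
  refine ⟨?_, ?_⟩
  · rintro C₁ C₂ ⟨x₁, rfl⟩ ⟨x₂, rfl⟩ hnb₁ hnb₂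
    by_contra hne
    have hsep : ∀ y, (Gdelta D δ).Reachable x₁ y → ¬ (Gdelta D δ).Reachable x₂ y :=
      fun y h₁ h₂ => hne <| Set.ext fun _ =>
        ⟨(h₁.trans h₂.symm).symm.trans, (h₁.trans h₂.symm).trans⟩
    obtain ⟨u₁, hu₁, v₁, hv₁, huv₁, hd₁⟩ :=
      exists_lt_of_not_forall_d_le lt hδ.le (mt isBlock_of_forall_d_le hnb₁)
    obtain ⟨u₂, hu₂, v₂, hv₂, huv₂, hd₂⟩ :=
      exists_lt_of_not_forall_d_le lt hδ.le (mt isBlock_of_forall_d_le hnb₂)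
    exact asymm (lt_lt_of_not_reachable hlt.2 hu₁ hv₁ (fun h => hsep u₂ h hu₂) huv₁ hd₁).1
      (lt_lt_of_not_reachable hlt.2 hu₂ hv₂ (hsep u₁ hu₁) huv₂ hd₂).1
  · rintro C ⟨x₀, rfl⟩ hb
    obtain ⟨z, hz⟩ := SimpleGraph.exists_not_reachable_of_not_connected hnc x₀
    refine Real.sSup_le ?_ hδ.le
    rintro _ ⟨u, hu, v, hv, rfl⟩
    exact forall_d_le_of_isBlock hlt hδ.le hz hb u hu v hv

/-- in a Robinson space with G_δ disconnected, at most one component of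
G_δ is not a block, and every component that is a block has diameter at most δ. -/
theorem stmt4 [Fintype X] [Nonempty X] (D : Dissim X)
    (hRob : Robinson D)
    (δ : ℝ) (hδ : 0 < δ)
    (hnc : ¬ (Gdelta D δ).Connected) :
    (∀ C₁ C₂ : Set X, IsCompOf (Gdelta D δ) C₁ → IsCompOf (Gdelta D δ) C₂ →
      ¬ IsBlock D C₁ → ¬ IsBlock D C₂ → C₁ = C₂) ∧
    (∀ C : Set X, IsCompOf (Gdelta D δ) C → IsBlock D C → diam D C ≤ δ) :=
  stmt4_general D hRob δ hδ hnc
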